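/- arXiv:2510.12529 — 4 statements merged into one kernel-verified Lean document; each statement's English description precedes it below -/
import Mathlib

section
/- Let c ∈ ℝ with c + 1 > 0. There exist constants C₁, C₂ > 0 such that for all z₀ = (x₀, y₀) with y₀ ≥ 0 and all r > 0, C₁ r^{N+1+c} (y₀/r)^c (min(y₀/r, 1))^{−c} ≤ V(z₀, r) ≤ C₂ r^{N+1+c} (y₀/r)^c (min(y₀/r, 1))^{−c}. -/
/-!
Write `M = max y₀ r`. The `y`-integral runs over an interval of length between `r` and `2r`
whose top half `(y₀ + r/2, y₀ + r)` lies in `[M/2, 2M]`, where `y^c` is within a factor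
`2^|c|` of `M^c`; this gives `∫ y^c ≳ r M^c`. For the upper bound, if `y₀ ≥ 2r` the whole
interval lies in `[M/2, 2M]`; if `y₀ < 2r` the integrable singularity at `0` is absorbed by
enlarging the interval to `(0, y₀ + r)` and integrating exactly. Finally
`r^N · r M^c = r^{N+1+c} (max (y₀/r) 1)^c`.
-/

open MeasureTheory Set

/-- `V (z₀, r) = ω_N r^N ∫_{max(y₀-r,0)}^{y₀+r} y^c dy`, the μ-measure
(`dμ = y^c dx dy`) of the cylindrical ball `Q(z₀,r)`. -/
noncomputable def V (N : ℕ) (c y₀ r : ℝ) : ℝ :=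
  (volume (Metric.ball (0 : EuclideanSpace ℝ (Fin N)) 1)).toReal * r ^ N *
    ∫ y in Ioo (max (y₀ - r) 0) (y₀ + r), y ^ c

lemma rpow_le_rpow_abs_mul_rpow_of_le_mul {x y k : ℝ} (c : ℝ) (hx : 0 < x) (hk : 1 ≤ k)
    (hxy : x ≤ k * y) (hyx : y ≤ k * x) : x ^ c ≤ k ^ |c| * y ^ c := by
  have hy : 0 < y := pos_of_mul_pos_right (hx.trans_le hxy) (by linarith)
  rcases le_total 0 c with hc | hc
  · rw [abs_of_nonneg hc, ← Real.mul_rpow (by linarith) hy.le]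
    exact Real.rpow_le_rpow hx.le hxy hc
  · have hyk : k⁻¹ * y ≤ x := by
      rw [inv_mul_le_iff₀ (by linarith)]; exact hyx
    calc x ^ c ≤ (k⁻¹ * y) ^ c := Real.rpow_le_rpow_of_nonpos (by positivity) hyk hc
      _ = k ^ |c| * y ^ c := by
        rw [Real.mul_rpow (by positivity) hy.le, Real.inv_rpow (by linarith), ← Real.rpow_neg
          (by linarith), abs_of_nonpos hc]

lemma setIntegral_Ioo_le_mul_of_le {f : ℝ → ℝ} {a b C : ℝ} (hab : a ≤ b)
    (hf : IntegrableOn f (Ioo a b)) (hfC : ∀ x ∈ Ioo a b, f x ≤ C) :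
    ∫ x in Ioo a b, f x ≤ C * (b - a) := by
  calc ∫ x in Ioo a b, f x ≤ ∫ _ in Ioo a b, C :=
        setIntegral_mono_on hf (integrableOn_const (by simp)) measurableSet_Ioo hfC
    _ = C * (b - a) := by
      rw [setIntegral_const, Real.volume_real_Ioo_of_le hab, smul_eq_mul, mul_comm]

lemma integrableOn_rpow_Ioo {c : ℝ} (hc : -1 < c) (a b : ℝ) :
    IntegrableOn (fun y : ℝ => y ^ c) (Ioo a b) :=
  (intervalIntegral.intervalIntegrable_rpow' hc).1.mono_set Ioo_subset_Ioc_self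

lemma setIntegral_rpow_Ioo_mono {c a a' b b' : ℝ} (hc : -1 < c) (ha : 0 ≤ a) (haa' : a ≤ a')
    (hb'b : b' ≤ b) : ∫ y in Ioo a' b', y ^ c ≤ ∫ y in Ioo a b, y ^ c := by
  refine setIntegral_mono_set (integrableOn_rpow_Ioo hc a b) ?_
    (Ioo_subset_Ioo haa' hb'b).eventuallyLE
  filter_upwards [ae_restrict_mem measurableSet_Ioo] with y hy
  exact Real.rpow_nonneg (ha.trans hy.1.le) c

lemma setIntegral_rpow_Ioo_zero {c b : ℝ} (hc : -1 < c) (hb : 0 ≤ b) :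
    ∫ y in Ioo 0 b, y ^ c = b ^ (c + 1) / (c + 1) := by
  rw [← integral_Ioc_eq_integral_Ioo, ← intervalIntegral.integral_of_le hb,
    integral_rpow (Or.inl hc), Real.zero_rpow (by linarith), sub_zero]

section

variable {c y₀ r : ℝ}

lemma le_setIntegral_rpow_Ioo (hc : -1 < c) (hy₀ : 0 ≤ y₀) (hr : 0 < r) :
    (2 * 2 ^ |c|)⁻¹ * (r * max y₀ r ^ c) ≤ ∫ y in Ioo (max (y₀ - r) 0) (y₀ + r), y ^ c := by
  have hM : 0 < max y₀ r := lt_max_of_lt_right hr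
  have hbound : ∀ y ∈ Ioo (y₀ + r / 2) (y₀ + r), (2 ^ |c|)⁻¹ * max y₀ r ^ c ≤ y ^ c := by
    intro y hy
    rw [inv_mul_le_iff₀ (by positivity)]
    apply rpow_le_rpow_abs_mul_rpow_of_le_mul c hM one_le_two
    · exact max_le (by linarith [hy.1]) (by linarith [hy.1])
    · linarith [hy.2, le_max_left y₀ r, le_max_right y₀ r]
  calc (2 * 2 ^ |c|)⁻¹ * (r * max y₀ r ^ c)
      = (2 ^ |c|)⁻¹ * max y₀ r ^ c * (y₀ + r - (y₀ + r / 2)) := by ring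
    _ ≤ ∫ y in Ioo (y₀ + r / 2) (y₀ + r), y ^ c := by
      rw [← Real.volume_real_Ioo_of_le (by linarith)]
      exact setIntegral_ge_of_const_le_real measurableSet_Ioo (by simp) hbound
        (integrableOn_rpow_Ioo hc _ _)
    _ ≤ ∫ y in Ioo (max (y₀ - r) 0) (y₀ + r), y ^ c :=
      setIntegral_rpow_Ioo_mono hc (le_max_right _ _) (max_le (by linarith) (by linarith)) le_rfl

lemma setIntegral_rpow_Ioo_le_of_lt (hc : -1 < c) (hy₀ : 0 ≤ y₀) (hr : 0 < r)
    (hy₀r : y₀ < 2 * r) :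
    ∫ y in Ioo (max (y₀ - r) 0) (y₀ + r), y ^ c ≤
      2 ^ |c| * (3 / (c + 1)) * (r * max y₀ r ^ c) := by
  have hb : (y₀ + r) ^ c ≤ 2 ^ |c| * max y₀ r ^ c :=
    rpow_le_rpow_abs_mul_rpow_of_le_mul c (by linarith) one_le_two
      (by linarith [le_max_left y₀ r, le_max_right y₀ r])
      (max_le (by linarith) (by linarith))
  calc ∫ y in Ioo (max (y₀ - r) 0) (y₀ + r), y ^ c
      ≤ ∫ y in Ioo 0 (y₀ + r), y ^ c :=
        setIntegral_rpow_Ioo_mono hc le_rfl (le_max_right _ _) le_rfl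
    _ = (y₀ + r) * (y₀ + r) ^ c / (c + 1) := by
      rw [setIntegral_rpow_Ioo_zero hc (by linarith), Real.rpow_add_one (by linarith), mul_comm]
    _ ≤ (3 * r) * (2 ^ |c| * max y₀ r ^ c) / (c + 1) := by
      gcongr <;> linarith
    _ = 2 ^ |c| * (3 / (c + 1)) * (r * max y₀ r ^ c) := by ring

lemma setIntegral_rpow_Ioo_le_of_le (hc : -1 < c) (hr : 0 < r) (hy₀r : 2 * r ≤ y₀) :
    ∫ y in Ioo (max (y₀ - r) 0) (y₀ + r), y ^ c ≤ 2 ^ |c| * 2 * (r * max y₀ r ^ c) := by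
  rw [max_eq_left (by linarith : 0 ≤ y₀ - r), max_eq_left (by linarith : r ≤ y₀)]
  calc ∫ y in Ioo (y₀ - r) (y₀ + r), y ^ c
      ≤ 2 ^ |c| * y₀ ^ c * (y₀ + r - (y₀ - r)) := by
        refine setIntegral_Ioo_le_mul_of_le (by linarith) (integrableOn_rpow_Ioo hc _ _) ?_
        intro y hy
        exact rpow_le_rpow_abs_mul_rpow_of_le_mul c (by linarith [hy.1]) one_le_two
          (by linarith [hy.2]) (by linarith [hy.1])
    _ = 2 ^ |c| * 2 * (r * y₀ ^ c) := by ring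

lemma setIntegral_rpow_Ioo_le (hc : -1 < c) (hy₀ : 0 ≤ y₀) (hr : 0 < r) :
    ∫ y in Ioo (max (y₀ - r) 0) (y₀ + r), y ^ c ≤
      2 ^ |c| * (3 / (c + 1) + 2) * (r * max y₀ r ^ c) := by
  have hK : 0 ≤ 3 / (c + 1) := div_nonneg (by norm_num) (by linarith)
  rcases lt_or_ge y₀ (2 * r) with h | h
  · refine (setIntegral_rpow_Ioo_le_of_lt hc hy₀ hr h).trans ?_
    gcongr
    linarith
  · refine (setIntegral_rpow_Ioo_le_of_le hc hr h).trans ?_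
    gcongr
    linarith

end

lemma rpow_mul_max_div_rpow_eq {N : ℕ} {c y₀ r : ℝ} (hr : 0 < r) :
    r ^ ((N : ℝ) + 1 + c) * max (y₀ / r) 1 ^ c = r ^ N * (r * max y₀ r ^ c) := by
  have hmax : r * max (y₀ / r) 1 = max y₀ r := by
    rw [mul_max_of_nonneg _ _ hr.le, mul_div_cancel₀ _ hr.ne', mul_one]
  rw [Real.rpow_add hr, Real.rpow_add hr, Real.rpow_natCast, Real.rpow_one, ← hmax,
    Real.mul_rpow hr.le (le_max_of_le_right zero_le_one)]
  ring

/-- The weight `(y₀/r)^c (min(y₀/r,1))^{-c}` of the paper is written `(max (y₀/r) 1)^c`. -/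
theorem stmt_2 (N : ℕ) (c : ℝ) (hc : c + 1 > 0) :
    ∃ C₁ > (0:ℝ), ∃ C₂ > (0:ℝ), ∀ y₀ r : ℝ, 0 ≤ y₀ → 0 < r →
      C₁ * (r ^ ((N : ℝ) + 1 + c) * (max (y₀ / r) 1) ^ c) ≤ V N c y₀ r ∧
      V N c y₀ r ≤ C₂ * (r ^ ((N : ℝ) + 1 + c) * (max (y₀ / r) 1) ^ c) := by
  have hc' : -1 < c := by linarith
  set ω := (volume (Metric.ball (0 : EuclideanSpace ℝ (Fin N)) 1)).toReal
  have hω : 0 < ω :=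
    ENNReal.toReal_pos (Metric.measure_ball_pos _ _ one_pos).ne' measure_ball_lt_top.ne
  refine ⟨ω * (2 * 2 ^ |c|)⁻¹, by positivity, ω * (2 ^ |c| * (3 / (c + 1) + 2)), by positivity,
    fun y₀ r hy₀ hr => ?_⟩
  have hV : V N c y₀ r = ω * r ^ N * ∫ y in Ioo (max (y₀ - r) 0) (y₀ + r), y ^ c := rfl
  have hωr : 0 ≤ ω * r ^ N := by positivity
  rw [rpow_mul_max_div_rpow_eq hr, hV]
  constructor
  · calc ω * (2 * 2 ^ |c|)⁻¹ * (r ^ N * (r * max y₀ r ^ c))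
        = ω * r ^ N * ((2 * 2 ^ |c|)⁻¹ * (r * max y₀ r ^ c)) := by ring
      _ ≤ _ := mul_le_mul_of_nonneg_left (le_setIntegral_rpow_Ioo hc' hy₀ hr) hωr
  · calc ω * r ^ N * ∫ y in Ioo (max (y₀ - r) 0) (y₀ + r), y ^ c
        ≤ ω * r ^ N * (2 ^ |c| * (3 / (c + 1) + 2) * (r * max y₀ r ^ c)) :=
          mul_le_mul_of_nonneg_left (setIntegral_rpow_Ioo_le hc' hy₀ hr) hωr
      _ = _ := by ring
end

section
/- Let c ∈ ℝ with c + 1 > 0. There exists C ≥ 1 such that for all z₀ = (x₀, y₀) with y₀ ≥ 0 and all 0 < r ≤ s, V(z₀, s)/V(z₀, r) ≤ C (s/r)^{N+1+c⁺}, where c⁺ = max(c, 0). In particular the measure μ = y^c dx dy is doubling on cylindrical balls. -/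
/-!
Write `a = max (y₀ - t) 0` and `b = y₀ + t`, so that `t ≤ b - a ≤ 2t`. The `x`-factor of `V` is
`ω_N t ^ N`, and the `y`-factor is `(b ^ (c + 1) - a ^ (c + 1)) / (c + 1)`. Bernoulli's inequality
makes `1 - u ^ p` comparable to `1 - u` on `[0, 1]` for `p > 0`; applied to `u = a / b` it makes
`b ^ (c + 1) - a ^ (c + 1)` comparable to `(b - a) b ^ c`, hence to `t (y₀ + t) ^ c`. Finally
`(y₀ + s) ^ c ≤ (s / r) ^ c⁺ (y₀ + r) ^ c`.
-/

open MeasureTheory Set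

namespace Real

lemma min_mul_one_sub_le_one_sub_rpow {u p : ℝ} (hu₀ : 0 ≤ u) (hu₁ : u ≤ 1) (hp : 0 ≤ p) :
    min p 1 * (1 - u) ≤ 1 - u ^ p := by
  rcases le_total p 1 with hp₁ | hp₁
  · have h := rpow_one_add_le_one_add_mul_self (s := u - 1) (by linarith) hp hp₁
    rw [add_sub_cancel] at h
    nlinarith [min_le_left p 1]
  · have h := rpow_le_self_of_le_one hu₀ hu₁ hp₁
    nlinarith [min_le_right p 1]

lemma one_sub_rpow_le_max_mul_one_sub {u p : ℝ} (hu₀ : 0 ≤ u) (hu₁ : u ≤ 1) :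
    1 - u ^ p ≤ max p 1 * (1 - u) := by
  rcases le_total p 1 with hp₁ | hp₁
  · have h := self_le_rpow_of_le_one hu₀ hu₁ hp₁
    nlinarith [le_max_right p 1]
  · have h := one_add_mul_self_le_rpow_one_add (s := u - 1) (by linarith) hp₁
    rw [add_sub_cancel] at h
    nlinarith [le_max_left p 1]

lemma rpow_sub_rpow_eq_mul_one_sub {a b : ℝ} (ha : 0 ≤ a) (hb : 0 < b) (p : ℝ) :
    b ^ p - a ^ p = b ^ p * (1 - (a / b) ^ p) := by
  rw [div_rpow ha hb.le]
  field_simp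

lemma rpow_sub_one_mul_sub_eq {b : ℝ} (hb : 0 < b) (a p : ℝ) :
    b ^ (p - 1) * (b - a) = b ^ p * (1 - a / b) := by
  rw [rpow_sub_one hb.ne']
  field_simp

lemma min_mul_le_rpow_sub_rpow {a b p : ℝ} (ha : 0 ≤ a) (hab : a ≤ b) (hp : 0 ≤ p) :
    min p 1 * (b ^ (p - 1) * (b - a)) ≤ b ^ p - a ^ p := by
  rcases hab.eq_or_lt with rfl | hab
  · simp
  have hb := ha.trans_lt hab
  rw [rpow_sub_rpow_eq_mul_one_sub ha hb, rpow_sub_one_mul_sub_eq hb, mul_left_comm]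
  exact mul_le_mul_of_nonneg_left
    (min_mul_one_sub_le_one_sub_rpow (div_nonneg ha hb.le) ((div_le_one hb).2 hab.le) hp)
    (by positivity)

lemma rpow_sub_rpow_le_max_mul {a b : ℝ} (ha : 0 ≤ a) (hab : a ≤ b) (p : ℝ) :
    b ^ p - a ^ p ≤ max p 1 * (b ^ (p - 1) * (b - a)) := by
  rcases hab.eq_or_lt with rfl | hab
  · simp
  have hb := ha.trans_lt hab
  rw [rpow_sub_rpow_eq_mul_one_sub ha hb, rpow_sub_one_mul_sub_eq hb, mul_left_comm]
  exact mul_le_mul_of_nonneg_left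
    (one_sub_rpow_le_max_mul_one_sub (div_nonneg ha hb.le) ((div_le_one hb).2 hab.le))
    (by positivity)

end Real

open Real

/-- `(c + 1) ∫_{max (y₀ - t) 0}^{y₀ + t} y ^ c dy` (see `V_eq`). -/
noncomputable def sectionMass (c y₀ t : ℝ) : ℝ :=
  (y₀ + t) ^ (c + 1) - max (y₀ - t) 0 ^ (c + 1)

section sectionMass

variable {c y₀ t : ℝ}

lemma min_mul_le_sectionMass (hc : 0 < c + 1) (hy : 0 ≤ y₀) (ht : 0 ≤ t) :
    min (c + 1) 1 * (t * (y₀ + t) ^ c) ≤ sectionMass c y₀ t := by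
  have hgap : t ≤ (y₀ + t) - max (y₀ - t) 0 := by
    rcases le_total (y₀ - t) 0 with h | h <;> simp [h] <;> linarith
  calc min (c + 1) 1 * (t * (y₀ + t) ^ c)
      ≤ min (c + 1) 1 * ((y₀ + t) ^ (c + 1 - 1) * ((y₀ + t) - max (y₀ - t) 0)) := by
        rw [add_sub_cancel_right, mul_comm t]
        gcongr
    _ ≤ sectionMass c y₀ t :=
        min_mul_le_rpow_sub_rpow (le_max_right _ _) (max_le (by linarith) (by linarith)) hc.le

lemma sectionMass_le_mul (hy : 0 ≤ y₀) (ht : 0 ≤ t) :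
    sectionMass c y₀ t ≤ 2 * max (c + 1) 1 * (t * (y₀ + t) ^ c) := by
  have hgap : (y₀ + t) - max (y₀ - t) 0 ≤ 2 * t := by
    linarith [le_max_left (y₀ - t) 0]
  calc sectionMass c y₀ t
      ≤ max (c + 1) 1 * ((y₀ + t) ^ (c + 1 - 1) * ((y₀ + t) - max (y₀ - t) 0)) :=
        rpow_sub_rpow_le_max_mul (le_max_right _ _) (max_le (by linarith) (by linarith)) _
    _ ≤ max (c + 1) 1 * ((y₀ + t) ^ c * (2 * t)) := by
        rw [add_sub_cancel_right]
        gcongr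
    _ = 2 * max (c + 1) 1 * (t * (y₀ + t) ^ c) := by ring

lemma sectionMass_pos (hc : 0 < c + 1) (hy : 0 ≤ y₀) (ht : 0 < t) : 0 < sectionMass c y₀ t :=
  lt_of_lt_of_le (by positivity) (min_mul_le_sectionMass hc hy ht.le)

end sectionMass

lemma add_rpow_le_div_rpow_mul {c y₀ r s : ℝ} (hy : 0 ≤ y₀) (hr : 0 < r) (hrs : r ≤ s) :
    (y₀ + s) ^ c ≤ (s / r) ^ max c 0 * (y₀ + r) ^ c := by
  have hs := hr.trans_le hrs
  rcases le_total 0 c with hc | hc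
  · rw [max_eq_left hc, ← mul_rpow (by positivity) (by positivity)]
    refine rpow_le_rpow (by positivity) ?_ hc
    rw [div_mul_eq_mul_div, le_div_iff₀ hr]
    nlinarith
  · rw [max_eq_right hc, rpow_zero, one_mul]
    exact rpow_le_rpow_of_nonpos (by positivity) (by linarith) hc

lemma sectionMass_le_mul_sectionMass {c y₀ r s : ℝ} (hc : 0 < c + 1) (hy : 0 ≤ y₀) (hr : 0 < r)
    (hrs : r ≤ s) :
    sectionMass c y₀ s ≤
      2 * max (c + 1) 1 / min (c + 1) 1 * (s / r) ^ (1 + max c 0) * sectionMass c y₀ r := by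
  have hm : 0 < min (c + 1) 1 := lt_min hc one_pos
  have hs := hr.trans_le hrs
  calc sectionMass c y₀ s
      ≤ 2 * max (c + 1) 1 * (s * (y₀ + s) ^ c) := sectionMass_le_mul hy hs.le
    _ ≤ 2 * max (c + 1) 1 * (s * ((s / r) ^ max c 0 * (y₀ + r) ^ c)) := by
        gcongr
        exact add_rpow_le_div_rpow_mul hy hr hrs
    _ = 2 * max (c + 1) 1 / min (c + 1) 1 * (s / r) ^ (1 + max c 0) *
          (min (c + 1) 1 * (r * (y₀ + r) ^ c)) := by
        rw [rpow_add (by positivity), rpow_one]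
        field_simp
    _ ≤ _ := by
        gcongr
        exact min_mul_le_sectionMass hc hy hr.le

lemma V_eq {N : ℕ} {c y₀ t : ℝ} (hc : -1 < c) (hy : 0 ≤ y₀) (ht : 0 ≤ t) :
    V N c y₀ t = (volume (Metric.ball (0 : EuclideanSpace ℝ (Fin N)) 1)).toReal * t ^ N *
      (sectionMass c y₀ t / (c + 1)) := by
  rw [V, ← integral_Ioc_eq_integral_Ioo,
    ← intervalIntegral.integral_of_le (max_le (by linarith) (by linarith)),
    integral_rpow (Or.inl hc), sectionMass]

lemma V_div_V {N : ℕ} {c y₀ r s : ℝ} (hc : -1 < c) (hy : 0 ≤ y₀) (hr : 0 < r) (hs : 0 ≤ s) :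
    V N c y₀ s / V N c y₀ r = (s / r) ^ N * (sectionMass c y₀ s / sectionMass c y₀ r) := by
  have hω : 0 < (volume (Metric.ball (0 : EuclideanSpace ℝ (Fin N)) 1)).toReal :=
    ENNReal.toReal_pos (Metric.measure_ball_pos _ _ one_pos).ne' measure_ball_lt_top.ne
  have hc' : c + 1 ≠ 0 := by linarith
  rw [V_eq hc hy hs, V_eq hc hy hr.le, div_pow]
  field_simp

/-- Lemma 2.5, doubling condition: there is `C ≥ 1` with
`V(z₀,s)/V(z₀,r) ≤ C (s/r)^{N+1+c⁺}` for all `0 < r ≤ s` and `y₀ ≥ 0`. -/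
theorem stmt_3 (N : ℕ) (c : ℝ) (hc : c + 1 > 0) :
    ∃ C : ℝ, 1 ≤ C ∧ ∀ y₀ r s : ℝ, 0 ≤ y₀ → 0 < r → r ≤ s →
      V N c y₀ s / V N c y₀ r ≤ C * (s / r) ^ ((N : ℝ) + 1 + max c 0) := by
  refine ⟨2 * max (c + 1) 1 / min (c + 1) 1, ?_, fun y₀ r s hy hr hrs => ?_⟩
  · rw [one_le_div (lt_min hc one_pos)]
    linarith [min_le_right (c + 1) 1, le_max_right (c + 1) 1]
  have hs := hr.trans_le hrs
  have hratio := sectionMass_le_mul_sectionMass hc hy hr hrs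
  rw [← div_le_iff₀ (sectionMass_pos hc hy hr)] at hratio
  calc V N c y₀ s / V N c y₀ r
      = (s / r) ^ N * (sectionMass c y₀ s / sectionMass c y₀ r) :=
        V_div_V (by linarith) hy hr hs.le
    _ ≤ (s / r) ^ N * (2 * max (c + 1) 1 / min (c + 1) 1 * (s / r) ^ (1 + max c 0)) := by
        gcongr
    _ = _ := by
        rw [add_assoc, rpow_add (div_pos hs hr) (N : ℝ), rpow_natCast]
        ring
end

section
/- Let c ∈ ℝ and ε > 0. Then there exist constants C₁, C₂ > 0 such that for all y₁, y₂ > 0, C₁ exp(−ε|y₁−y₂|²) ≤ [y₁^{−c/2} (min(1,y₁))^{c/2}] / [y₂^{−c/2} (min(1,y₂))^{c/2}] ≤ C₂ exp(ε|y₁−y₂|²). -/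
/-!
Writing `a = c / 2`, the weight is `y ^ (-a) * (1 ∧ y) ^ a = (1 ∨ y) ^ (-a)`, so the logarithm
of the ratio is `-a (log (1 ∨ y₁) - log (1 ∨ y₂))`. Since `log` is `1`-Lipschitz on `[1, ∞)`
and `y ↦ 1 ∨ y` is `1`-Lipschitz, this is at most `|a| |y₁ - y₂|` in absolute value, and
`|a| t ≤ ε t² + a² / (4ε)` absorbs the linear term into the Gaussian one.
-/

open Real

lemma Real.log_sub_log_le_abs_sub {u v : ℝ} (hu : 0 < u) (hv : 1 ≤ v) :
    log u - log v ≤ |u - v| := by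
  have hv₀ : 0 < v := one_pos.trans_le hv
  calc log u - log v = log (u / v) := (log_div hu.ne' hv₀.ne').symm
    _ ≤ u / v - 1 := log_le_sub_one_of_pos (div_pos hu hv₀)
    _ = (u - v) / v := by field_simp
    _ ≤ |u - v| / v := by gcongr; exact le_abs_self _
    _ ≤ |u - v| := div_le_self (abs_nonneg _) hv

lemma Real.abs_log_sub_log_le_abs_sub {u v : ℝ} (hu : 1 ≤ u) (hv : 1 ≤ v) :
    |log u - log v| ≤ |u - v| :=
  abs_sub_le_iff.2
    ⟨log_sub_log_le_abs_sub (one_pos.trans_le hu) hv,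
      abs_sub_comm u v ▸ log_sub_log_le_abs_sub (one_pos.trans_le hv) hu⟩

lemma abs_log_max_one_sub_le (x y : ℝ) :
    |log (max 1 x) - log (max 1 y)| ≤ |x - y| :=
  (abs_log_sub_log_le_abs_sub (le_max_left 1 x) (le_max_left 1 y)).trans <| by
    rw [max_comm 1 x, max_comm 1 y]
    exact abs_max_sub_max_le_abs x y 1

lemma rpow_neg_mul_min_one_rpow (a : ℝ) {y : ℝ} (hy : 0 < y) :
    y ^ (-a) * min 1 y ^ a = max 1 y ^ (-a) := by
  rcases le_total y 1 with h | h
  · rw [min_eq_right h, max_eq_left h, ← rpow_add hy, neg_add_cancel, rpow_zero, one_rpow]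
  · rw [min_eq_left h, max_eq_right h, one_rpow, mul_one]

lemma max_one_rpow_neg_div (a x y : ℝ) :
    max 1 x ^ (-a) / max 1 y ^ (-a) = exp (-a * (log (max 1 x) - log (max 1 y))) := by
  rw [rpow_def_of_pos (one_pos.trans_le (le_max_left 1 x)),
    rpow_def_of_pos (one_pos.trans_le (le_max_left 1 y)), ← exp_sub]
  ring_nf

lemma mul_le_mul_sq_add_sq_div {ε : ℝ} (hε : 0 < ε) (b t : ℝ) :
    b * t ≤ ε * t ^ 2 + b ^ 2 / (4 * ε) := by
  have h : ε * t ^ 2 + b ^ 2 / (4 * ε) - b * t = (2 * ε * t - b) ^ 2 / (4 * ε) := by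
    field_simp
    ring
  have : 0 ≤ (2 * ε * t - b) ^ 2 / (4 * ε) := by positivity
  linarith

lemma exp_neg_mul_exp_neg_le_exp_and_exp_le_exp_mul_exp {x s K : ℝ} (h : |x| ≤ s + K) :
    exp (-K) * exp (-s) ≤ exp x ∧ exp x ≤ exp K * exp s := by
  rw [← exp_add, ← exp_add, exp_le_exp, exp_le_exp]
  constructor <;> linarith [neg_abs_le x, le_abs_self x]

/-- Equation (2.5): for any `ε > 0` there are `C₁, C₂ > 0` such that for all
`y₁, y₂ > 0`,
`C₁ e^{-ε|y₁-y₂|²} ≤ (y₁^{-c/2}(1∧y₁)^{c/2})/(y₂^{-c/2}(1∧y₂)^{c/2}) ≤ C₂ e^{ε|y₁-y₂|²}`. -/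
theorem stmt_5 (c ε : ℝ) (hε : 0 < ε) :
    ∃ C₁ > (0:ℝ), ∃ C₂ > (0:ℝ), ∀ y₁ y₂ : ℝ, 0 < y₁ → 0 < y₂ →
      C₁ * Real.exp (-ε * |y₁ - y₂| ^ 2) ≤
        (y₁ ^ (-c / 2) * (min 1 y₁) ^ (c / 2)) /
          (y₂ ^ (-c / 2) * (min 1 y₂) ^ (c / 2)) ∧
      (y₁ ^ (-c / 2) * (min 1 y₁) ^ (c / 2)) /
          (y₂ ^ (-c / 2) * (min 1 y₂) ^ (c / 2)) ≤
        C₂ * Real.exp (ε * |y₁ - y₂| ^ 2) := by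
  set a := c / 2
  refine ⟨exp (-(a ^ 2 / (4 * ε))), exp_pos _, exp (a ^ 2 / (4 * ε)), exp_pos _,
    fun y₁ y₂ h₁ h₂ => ?_⟩
  have hlog : |-a * (log (max 1 y₁) - log (max 1 y₂))| ≤
      ε * |y₁ - y₂| ^ 2 + a ^ 2 / (4 * ε) :=
    calc |-a * (log (max 1 y₁) - log (max 1 y₂))|
        = |a| * |log (max 1 y₁) - log (max 1 y₂)| := by rw [abs_mul, abs_neg]
      _ ≤ |a| * |y₁ - y₂| :=
        mul_le_mul_of_nonneg_left (abs_log_max_one_sub_le y₁ y₂) (abs_nonneg a)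
      _ ≤ ε * |y₁ - y₂| ^ 2 + |a| ^ 2 / (4 * ε) := mul_le_mul_sq_add_sq_div hε _ _
      _ = ε * |y₁ - y₂| ^ 2 + a ^ 2 / (4 * ε) := by rw [sq_abs a]
  rw [neg_div, rpow_neg_mul_min_one_rpow a h₁, rpow_neg_mul_min_one_rpow a h₂,
    max_one_rpow_neg_div, neg_mul ε]
  exact exp_neg_mul_exp_neg_le_exp_and_exp_le_exp_mul_exp hlog
end

section
/- Limit at −∞ of bounded-below eternal solutions: Assume the Harnack inequality u(s, z₂) ≤ C u(t, z₁) exp(C|z₁−z₂|²/(t−s)) holds for all nonnegative solutions of ∂_t u = ℒu on (−∞, T]. Let u be a solution on (−∞,T] × closure(ℝ^{N+1}_+) with L = inf u > −∞. Then for every z ∈ ℝ^{N+1}_+, lim_{t→−∞} u(t, z) = L. -/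
open Set

/-- Partial derivative in the `i`-th `x`-direction. -/
noncomputable def pX {N : ℕ} (i : Fin N) (f : EuclideanSpace ℝ (Fin N) → ℝ)
    (x : EuclideanSpace ℝ (Fin N)) : ℝ :=
  fderiv ℝ f x (EuclideanSpace.single i 1)

/-- The Bessel operator `ℒ v = Δ_x v + 2a·∇_x D_y v + D_yy v + (c/y) D_y v`. -/
noncomputable def Lop {N : ℕ} (a : EuclideanSpace ℝ (Fin N)) (c : ℝ)
    (v : EuclideanSpace ℝ (Fin N) → ℝ → ℝ)
    (x : EuclideanSpace ℝ (Fin N)) (y : ℝ) : ℝ :=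
  (∑ i, pX i (fun x' => pX i (fun x'' => v x'' y) x') x)
  + 2 * ∑ i, a i * pX i (fun x' => deriv (v x') y) x
  + deriv (deriv (v x)) y
  + c / y * deriv (v x) y

/-- Time derivative `∂_t u`. -/
noncomputable def Dt {N : ℕ} (u : ℝ → EuclideanSpace ℝ (Fin N) → ℝ → ℝ)
    (t : ℝ) (x : EuclideanSpace ℝ (Fin N)) (y : ℝ) : ℝ :=
  deriv (fun s => u s x y) t

/-- `u ∈ C^{1,2}(S)`: `u`, `∂_t u` and all first and second spatial derivatives
exist and are continuous on `S ⊆ ℝ × ℝ^N × [0,∞)` (derivatives taken up to the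
boundary). -/
def C12On {N : ℕ} (u : ℝ → EuclideanSpace ℝ (Fin N) → ℝ → ℝ)
    (S : Set (ℝ × EuclideanSpace ℝ (Fin N) × ℝ)) : Prop :=
  ContinuousOn (fun p => u p.1 p.2.1 p.2.2) S ∧
  ContinuousOn (fun p => Dt u p.1 p.2.1 p.2.2) S ∧
  ContinuousOn (fun p => deriv (u p.1 p.2.1) p.2.2) S ∧
  ContinuousOn (fun p => deriv (deriv (u p.1 p.2.1)) p.2.2) S ∧
  (∀ i, ContinuousOn (fun p => pX i (fun x => u p.1 x p.2.2) p.2.1) S) ∧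
  (∀ i j, ContinuousOn
    (fun p => pX i (fun x => pX j (fun x' => u p.1 x' p.2.2) x) p.2.1) S) ∧
  (∀ i, ContinuousOn (fun p => pX i (fun x => deriv (u p.1 x) p.2.2) p.2.1) S)

/-- A classical solution of `∂_t v = ℒv` on `[0,S] × closure(ℝ^{N+1}_+)`:
`v ∈ C^{1,2}((0,S] × closure) ∩ C([0,S] × closure)` solving the equation. -/
def SolOnIcc {N : ℕ} (a : EuclideanSpace ℝ (Fin N)) (c S : ℝ)
    (v : ℝ → EuclideanSpace ℝ (Fin N) → ℝ → ℝ) : Prop :=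
  C12On v (Ioc 0 S ×ˢ (univ : Set (EuclideanSpace ℝ (Fin N))) ×ˢ Ici 0) ∧
  ContinuousOn (fun p => v p.1 p.2.1 p.2.2)
    (Icc 0 S ×ˢ (univ : Set (EuclideanSpace ℝ (Fin N))) ×ˢ Ici 0) ∧
  (∀ t ∈ Ioc (0:ℝ) S, ∀ x, ∀ y : ℝ, 0 < y → Dt v t x y = Lop a c (v t) x y)

/-- A classical solution of `∂_t u = ℒu` on `(-∞,T] × closure(ℝ^{N+1}_+)`:
`u ∈ C^{1,2}((-∞,T] × closure)` solving the equation. -/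
def SolOnIic {N : ℕ} (a : EuclideanSpace ℝ (Fin N)) (c T : ℝ)
    (u : ℝ → EuclideanSpace ℝ (Fin N) → ℝ → ℝ) : Prop :=
  C12On u (Iic T ×ˢ (univ : Set (EuclideanSpace ℝ (Fin N))) ×ˢ Ici 0) ∧
  (∀ t ≤ T, ∀ x, ∀ y : ℝ, 0 < y → Dt u t x y = Lop a c (u t) x y)

/-!
`w = u - L` is a nonnegative solution, so Harnack's inequality bounds `w(s, z)` by
`C w(t₁, z₁) exp (C |z₁ - z|² / (t₁ - s))` for every later interior point `(t₁, z₁)`. The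
exponential tends to `1` as `s → -∞`, hence `limsup_{s → -∞} w(s, z) ≤ C w(t₁, z₁)`, and the
right side is arbitrarily small since `inf w = 0` (by continuity up to `y = 0`, this infimum is
also approached at interior points).
-/

open Filter Topology

section SubConst

variable {N : ℕ}

lemma Dt_sub_const (u : ℝ → EuclideanSpace ℝ (Fin N) → ℝ → ℝ) (L : ℝ) :
    Dt (fun t x y => u t x y - L) = Dt u := by
  funext t x y
  simp only [Dt, deriv_sub_const]

lemma Lop_sub_const (a : EuclideanSpace ℝ (Fin N)) (c L : ℝ)
    (v : EuclideanSpace ℝ (Fin N) → ℝ → ℝ) :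
    Lop a c (fun x y => v x y - L) = Lop a c v := by
  funext x y
  simp only [Lop, pX, fderiv_sub_const, deriv_sub_const, deriv_sub_const_fun]

lemma C12On.sub_const {u : ℝ → EuclideanSpace ℝ (Fin N) → ℝ → ℝ}
    {S : Set (ℝ × EuclideanSpace ℝ (Fin N) × ℝ)} (h : C12On u S) (L : ℝ) :
    C12On (fun t x y => u t x y - L) S := by
  obtain ⟨hu, hDt, hDy, hDyy, hDx, hDxx, hDxy⟩ := h
  refine ⟨hu.sub continuousOn_const, ?_, ?_, ?_, ?_, ?_, ?_⟩
  · simpa only [Dt_sub_const] using hDt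
  · simpa only [deriv_sub_const] using hDy
  · simpa only [deriv_sub_const_fun] using hDyy
  · simpa only [pX, fderiv_sub_const] using hDx
  · simpa only [pX, fderiv_sub_const] using hDxx
  · simpa only [pX, fderiv_sub_const, deriv_sub_const] using hDxy

lemma SolOnIic.sub_const {a : EuclideanSpace ℝ (Fin N)} {c T : ℝ}
    {u : ℝ → EuclideanSpace ℝ (Fin N) → ℝ → ℝ} (h : SolOnIic a c T u) (L : ℝ) :
    SolOnIic a c T (fun t x y => u t x y - L) := by
  refine ⟨h.1.sub_const L, fun t ht x y hy => ?_⟩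
  simpa only [Dt_sub_const, Lop_sub_const] using h.2 t ht x y hy

end SubConst

lemma isGLB_image_pos_iff_isGLB_image_nonneg {X : Type*} [TopologicalSpace X]
    {u : ℝ → X → ℝ → ℝ} {I : Set ℝ} {L : ℝ}
    (hu : ContinuousOn (fun p : ℝ × X × ℝ => u p.1 p.2.1 p.2.2) (I ×ˢ univ ×ˢ Ici 0)) :
    IsGLB {r | ∃ t x y, t ∈ I ∧ 0 < y ∧ u t x y = r} L ↔
      IsGLB {r | ∃ t x y, t ∈ I ∧ 0 ≤ y ∧ u t x y = r} L := by
  refine isGLB_iff_of_subset_of_subset_closure ?_ ?_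
  · rintro _ ⟨t, x, y, ht, hy, rfl⟩
    exact ⟨t, x, y, ht, hy.le, rfl⟩
  rintro _ ⟨t, x, y, ht, hy, rfl⟩
  have hcont : ContinuousWithinAt (fun y' => u t x y') (Ioi y) y :=
    (hu.continuousWithinAt (x := (t, x, y)) ⟨ht, mem_univ x, hy⟩).comp
      (f := fun y' => (t, x, y'))
      (by fun_prop : Continuous fun y' : ℝ => (t, x, y')).continuousWithinAt
      fun y' hy' => ⟨ht, mem_univ x, hy.trans (le_of_lt hy')⟩
  refine closure_mono ?_ (hcont.mem_closure_image (by simp))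
  rintro _ ⟨y', hy', rfl⟩
  exact ⟨t, x, y', ht, hy.trans_lt hy', rfl⟩

lemma tendsto_atBot_of_le_add_mul_exp {f : ℝ → ℝ} {L : ℝ}
    (hlow : ∀ᶠ s in atBot, L ≤ f s)
    (hup : ∀ δ > 0, ∃ t K : ℝ, ∀ s < t, f s ≤ L + δ * Real.exp (K / (t - s))) :
    Tendsto f atBot (𝓝 L) := by
  refine tendsto_order.2 ⟨fun l hl => hlow.mono fun s hs => hl.trans_le hs, fun r hr => ?_⟩
  obtain ⟨t, K, hf⟩ := hup ((r - L) / 2) (by linarith)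
  have hexp : Tendsto (fun s => Real.exp (K / (t - s))) atBot (𝓝 1) := by
    have hgap : Tendsto (fun s => t - s) atBot atTop :=
      tendsto_atTop_add_const_left _ t tendsto_neg_atBot_atTop
    simpa [Function.comp_def] using
      (Real.continuous_exp.tendsto 0).comp (tendsto_const_nhds.div_atTop hgap)
  filter_upwards [eventually_lt_atBot t, hexp.eventually_lt_const one_lt_two] with s hs hlt
  nlinarith [hf s hs]

theorem stmt_17_general {N : ℕ} (a : EuclideanSpace ℝ (Fin N)) (c T : ℝ)
    (C : ℝ) (hC : 0 < C)
    (hHarnack : ∀ v, SolOnIic a c T v →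
      (∀ t ≤ T, ∀ x, ∀ y : ℝ, 0 ≤ y → 0 ≤ v t x y) →
      ∀ s t : ℝ, s < t → t ≤ T →
        ∀ x₁ x₂ : EuclideanSpace ℝ (Fin N), ∀ y₁ y₂ : ℝ, 0 < y₁ → 0 < y₂ →
          v s x₂ y₂ ≤ C * v t x₁ y₁ *
            Real.exp (C * (‖x₁ - x₂‖ ^ 2 + (y₁ - y₂) ^ 2) / (t - s)))
    (u : ℝ → EuclideanSpace ℝ (Fin N) → ℝ → ℝ)
    (hu : SolOnIic a c T u) (L : ℝ)
    (hL : IsGLB {r : ℝ | ∃ t x y, t ≤ T ∧ 0 ≤ y ∧ u t x y = r} L) :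
    ∀ x : EuclideanSpace ℝ (Fin N), ∀ y : ℝ, 0 < y →
      Filter.Tendsto (fun t => u t x y) Filter.atBot (nhds L) := by
  intro x y hy
  have hlow : ∀ t ≤ T, ∀ x y, 0 ≤ y → L ≤ u t x y := fun t ht x y hy =>
    hL.1 ⟨t, x, y, ht, hy, rfl⟩
  have hLpos := (isGLB_image_pos_iff_isGLB_image_nonneg (I := Iic T) hu.1.1).2 hL
  refine tendsto_atBot_of_le_add_mul_exp
    ((eventually_le_atBot T).mono fun s hs => hlow s hs x y hy.le) fun δ hδ => ?_
  obtain ⟨_, ⟨t₁, x₁, y₁, ht₁, hy₁, rfl⟩, -, hclose⟩ :=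
    hLpos.exists_between (lt_add_of_pos_right L (div_pos hδ hC))
  refine ⟨t₁, C * (‖x₁ - x‖ ^ 2 + (y₁ - y) ^ 2), fun s hs => ?_⟩
  have harnack : u s x y - L ≤ C * (u t₁ x₁ y₁ - L) *
      Real.exp (C * (‖x₁ - x‖ ^ 2 + (y₁ - y) ^ 2) / (t₁ - s)) :=
    hHarnack _ (hu.sub_const L) (fun t ht x y hy => sub_nonneg.2 (hlow t ht x y hy))
      s t₁ hs ht₁ x₁ x y₁ y hy₁ hy
  have hsmall : C * (u t₁ x₁ y₁ - L) ≤ δ := by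
    rw [← le_div_iff₀' hC]; linarith
  have := mul_le_mul_of_nonneg_right hsmall
    (Real.exp_pos (C * (‖x₁ - x‖ ^ 2 + (y₁ - y) ^ 2) / (t₁ - s))).le
  linarith

/-- Proposition 7.2(i) (limit at `-∞` of eternal solutions bounded below):
assume the Harnack inequality
`v(s,z₂) ≤ C v(t,z₁) exp(C|z₁-z₂|²/(t-s))` holds for all nonnegative solutions
on `(-∞,T]`. If `u` is a solution on `(-∞,T]` with `L = inf u > -∞`, then
`u(t,z) → L` as `t → -∞`, for every `z ∈ ℝ^{N+1}_+`. -/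
theorem stmt_17 {N : ℕ} (a : EuclideanSpace ℝ (Fin N)) (c T : ℝ)
    (hc : c + 1 > 0) (ha : ‖a‖ < 1) (C : ℝ) (hC : 0 < C)
    (hHarnack : ∀ v, SolOnIic a c T v →
      (∀ t ≤ T, ∀ x, ∀ y : ℝ, 0 ≤ y → 0 ≤ v t x y) →
      ∀ s t : ℝ, s < t → t ≤ T →
        ∀ x₁ x₂ : EuclideanSpace ℝ (Fin N), ∀ y₁ y₂ : ℝ, 0 < y₁ → 0 < y₂ →
          v s x₂ y₂ ≤ C * v t x₁ y₁ *
            Real.exp (C * (‖x₁ - x₂‖ ^ 2 + (y₁ - y₂) ^ 2) / (t - s)))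
    (u : ℝ → EuclideanSpace ℝ (Fin N) → ℝ → ℝ)
    (hu : SolOnIic a c T u) (L : ℝ)
    (hL : IsGLB {r : ℝ | ∃ t x y, t ≤ T ∧ 0 ≤ y ∧ u t x y = r} L) :
    ∀ x : EuclideanSpace ℝ (Fin N), ∀ y : ℝ, 0 < y →
      Filter.Tendsto (fun t => u t x y) Filter.atBot (nhds L) :=
  stmt_17_general a c T C hC hHarnack u hu L hL
end
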